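/- arXiv:1907.11382 — 2 statements merged into one kernel-verified Lean document; each statement's English description precedes it below -/
import Mathlib

section
/- Let E be a nontrivial complex Hilbert space, let H be a bounded selfadjoint invertible operator on E and set g = ‖H⁻¹‖⁻¹. Let ρ > 0 and let X be a bounded operator on E with X*X ≥ ρ²·1 and XX* ≥ ρ²·1. Suppose κ > 0 satisfies κ·‖HX − XH‖ ≤ g³/(12‖H‖) and κρ > 2g. Then the block operator L = [[−H, κX*], [κX, H]] on E ⊕ E satisfies L² ≥ (κ²ρ²/2)·1; in particular L is invertible. -/
open ContinuousLinearMap in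
/-- The block operator `[[A, B], [C, D]]` on the Hilbert space direct sum `E ⊕ F`
(realized as `WithLp 2 (E × F)`), acting by `(x, y) ↦ (A x + B y, C x + D y)`. -/
noncomputable def blockOp {E F : Type*} [NormedAddCommGroup E] [InnerProductSpace ℂ E]
    [NormedAddCommGroup F] [InnerProductSpace ℂ F]
    (A : E →L[ℂ] E) (B : F →L[ℂ] E) (C : E →L[ℂ] F) (D : F →L[ℂ] F) :
    WithLp 2 (E × F) →L[ℂ] WithLp 2 (E × F) :=
  ((WithLp.prodContinuousLinearEquiv 2 ℂ E F).symm.toContinuousLinearMap.comp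
    ((A.comp (fst ℂ E F) + B.comp (snd ℂ E F)).prod
      (C.comp (fst ℂ E F) + D.comp (snd ℂ E F)))).comp
    (WithLp.prodContinuousLinearEquiv 2 ℂ E F).toContinuousLinearMap

/-!
For `v = (x, y)` and `L = [[-H, κX*], [κX, H]]`, selfadjointness of `H` makes the cross terms of
`‖L v‖²` combine into the commutator:
`‖L v‖² = ‖Hx‖² + ‖Hy‖² + κ²(‖Xx‖² + ‖X*y‖²) + 2κ Re⟪[H, X]x, y⟫ ≥ (κ²ρ² - κ‖[H, X]‖)‖v‖²`.
Since `g ≤ ‖H‖`, the tuning conditions give `κ‖[H, X]‖ ≤ g²/12 < κ²ρ²/48`, and as `L` is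
selfadjoint, `‖L v‖² = ⟪L² v, v⟫`, so `L² ≥ κ²ρ²/2`. A strictly positive lower bound makes `L²`,
hence `L`, invertible.
-/

open ContinuousLinearMap
open scoped InnerProductSpace

theorem inv_norm_ring_inverse_le_norm {R : Type*} [NormedRing R] (a : R) :
    ‖Ring.inverse a‖⁻¹ ≤ ‖a‖ := by
  nontriviality R
  by_cases ha : IsUnit a
  · rcases (norm_nonneg (Ring.inverse a)).eq_or_lt with h0 | hpos
    · simp [← h0]
    · rw [inv_le_iff_one_le_mul₀' hpos]
      calc (1 : ℝ) ≤ ‖(1 : R)‖ := one_le_norm_one R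
        _ = ‖Ring.inverse a * a‖ := by rw [Ring.inverse_mul_cancel a ha]
        _ ≤ ‖Ring.inverse a‖ * ‖a‖ := norm_mul_le _ _
  · simp [Ring.inverse_non_unit a ha]

section
variable {E : Type*} [NormedAddCommGroup E] [InnerProductSpace ℂ E] [CompleteSpace E]

theorem ofReal_smul_one_le_adjoint_mul_self_iff (r : ℝ) (T : E →L[ℂ] E) :
    (r : ℂ) • (1 : E →L[ℂ] E) ≤ adjoint T * T ↔ ∀ x, r * ‖x‖ ^ 2 ≤ ‖T x‖ ^ 2 := by
  have hsa : IsSelfAdjoint (adjoint T * T - (r : ℂ) • 1) := by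
    refine .sub ?_ ?_
    · rw [← star_eq_adjoint]; exact .star_mul_self T
    · exact .smul (by rw [isSelfAdjoint_iff, Complex.star_def, Complex.conj_ofReal]) (.one _)
  rw [le_def, isPositive_def', and_iff_right hsa]
  refine forall_congr' fun x => ?_
  rw [reApplyInnerSelf_apply, sub_apply, mul_apply_eq_comp, smul_apply,
    one_apply_eq_self, inner_sub_left, adjoint_inner_left, inner_smul_left, Complex.conj_ofReal,
    map_sub, inner_self_eq_norm_sq, RCLike.re_to_complex, Complex.re_ofReal_mul,
    ← RCLike.re_to_complex, inner_self_eq_norm_sq, sub_nonneg]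

theorem IsSelfAdjoint.ofReal_smul_one_le_sq_iff {T : E →L[ℂ] E} (hT : IsSelfAdjoint T) (r : ℝ) :
    (r : ℂ) • (1 : E →L[ℂ] E) ≤ T ^ 2 ↔ ∀ x, r * ‖x‖ ^ 2 ≤ ‖T x‖ ^ 2 := by
  rw [sq, ← ofReal_smul_one_le_adjoint_mul_self_iff, hT.adjoint_eq]

theorem isStrictlyPositive_ofReal_smul_one {c : ℝ} (hc : 0 < c) :
    IsStrictlyPositive ((c : ℂ) • (1 : E →L[ℂ] E)) := by
  simpa [Algebra.algebraMap_eq_smul_one] using isStrictlyPositive_algebraMap (A := E →L[ℂ] E) hc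

end

section
variable {E F : Type*} [NormedAddCommGroup E] [InnerProductSpace ℂ E]
  [NormedAddCommGroup F] [InnerProductSpace ℂ F]

@[simp]
theorem blockOp_fst (A : E →L[ℂ] E) (B : F →L[ℂ] E) (C : E →L[ℂ] F) (D : F →L[ℂ] F)
    (v : WithLp 2 (E × F)) : (blockOp A B C D v).fst = A v.fst + B v.snd := rfl

@[simp]
theorem blockOp_snd (A : E →L[ℂ] E) (B : F →L[ℂ] E) (C : E →L[ℂ] F) (D : F →L[ℂ] F)
    (v : WithLp 2 (E × F)) : (blockOp A B C D v).snd = C v.fst + D v.snd := rfl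

theorem adjoint_blockOp [CompleteSpace E] [CompleteSpace F]
    (A : E →L[ℂ] E) (B : F →L[ℂ] E) (C : E →L[ℂ] F) (D : F →L[ℂ] F) :
    adjoint (blockOp A B C D) = blockOp (adjoint A) (adjoint C) (adjoint B) (adjoint D) := by
  refine ((eq_adjoint_iff _ _).mpr fun v w => ?_).symm
  simp only [WithLp.prod_inner_apply, WithLp.ofLp_fst, WithLp.ofLp_snd, blockOp_fst, blockOp_snd,
    inner_add_left, inner_add_right, adjoint_inner_left]
  ring

theorem norm_sq_blockOp_apply (A : E →L[ℂ] E) (B : F →L[ℂ] E) (C : E →L[ℂ] F) (D : F →L[ℂ] F)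
    (v : WithLp 2 (E × F)) :
    ‖blockOp A B C D v‖ ^ 2 = ‖A v.fst + B v.snd‖ ^ 2 + ‖C v.fst + D v.snd‖ ^ 2 :=
  WithLp.prod_norm_sq_eq_of_L2 _

end

section
variable {E : Type*} [NormedAddCommGroup E] [InnerProductSpace ℂ E] [CompleteSpace E]

noncomputable abbrev spectralLocalizer (H X : E →L[ℂ] E) (κ : ℝ) :
    WithLp 2 (E × E) →L[ℂ] WithLp 2 (E × E) :=
  blockOp (-H) ((κ : ℂ) • adjoint X) ((κ : ℂ) • X) H

theorem isSelfAdjoint_spectralLocalizer {H : E →L[ℂ] E} (hH : IsSelfAdjoint H) (X : E →L[ℂ] E)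
    (κ : ℝ) : IsSelfAdjoint (spectralLocalizer H X κ) := by
  rw [isSelfAdjoint_iff, star_eq_adjoint, adjoint_blockOp, map_neg, map_smulₛₗ, map_smulₛₗ,
    adjoint_adjoint, Complex.conj_ofReal, hH.adjoint_eq]

theorem norm_sq_spectralLocalizer_apply {H : E →L[ℂ] E} (hH : IsSelfAdjoint H) (X : E →L[ℂ] E)
    (κ : ℝ) (v : WithLp 2 (E × E)) :
    ‖spectralLocalizer H X κ v‖ ^ 2 =
      ‖H v.fst‖ ^ 2 + ‖H v.snd‖ ^ 2 + κ ^ 2 * (‖X v.fst‖ ^ 2 + ‖adjoint X v.snd‖ ^ 2) +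
        2 * κ * (⟪(H * X - X * H) v.fst, v.snd⟫_ℂ).re := by
  set x := v.fst
  set y := v.snd
  have hcross₁ : ⟪(-H) x, ((κ : ℂ) • adjoint X) y⟫_ℂ = -(κ * ⟪X (H x), y⟫_ℂ) := by
    rw [neg_apply, smul_apply, inner_neg_left, inner_smul_right, adjoint_inner_right]
  have hcross₂ : ⟪((κ : ℂ) • X) x, H y⟫_ℂ = κ * ⟪H (X x), y⟫_ℂ := by
    rw [smul_apply, inner_smul_left, Complex.conj_ofReal, ← adjoint_inner_left, hH.adjoint_eq]
  have hcomm : ⟪(H * X - X * H) x, y⟫_ℂ = ⟪H (X x), y⟫_ℂ - ⟪X (H x), y⟫_ℂ := by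
    rw [sub_apply, inner_sub_left]; rfl
  rw [norm_sq_blockOp_apply, norm_add_sq (𝕜 := ℂ), norm_add_sq (𝕜 := ℂ), hcross₁, hcross₂, hcomm]
  simp only [neg_apply, smul_apply, norm_neg, norm_smul, Complex.norm_real, Real.norm_eq_abs,
    mul_pow, sq_abs, RCLike.re_to_complex, Complex.neg_re, Complex.re_ofReal_mul, Complex.sub_re]
  ring

theorem le_norm_sq_spectralLocalizer_apply {H : E →L[ℂ] E} (hH : IsSelfAdjoint H)
    {X : E →L[ℂ] E} {ρ κ : ℝ} (hκ : 0 ≤ κ) (hX : ∀ x, ρ ^ 2 * ‖x‖ ^ 2 ≤ ‖X x‖ ^ 2)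
    (hX' : ∀ y, ρ ^ 2 * ‖y‖ ^ 2 ≤ ‖adjoint X y‖ ^ 2) (v : WithLp 2 (E × E)) :
    (κ ^ 2 * ρ ^ 2 - κ * ‖H * X - X * H‖) * ‖v‖ ^ 2 ≤ ‖spectralLocalizer H X κ v‖ ^ 2 := by
  set x := v.fst
  set y := v.snd
  set C := H * X - X * H
  have hre : -(‖C‖ * ‖x‖ * ‖y‖) ≤ (⟪C x, y⟫_ℂ).re := calc
    -(‖C‖ * ‖x‖ * ‖y‖) ≤ -‖⟪C x, y⟫_ℂ‖ := neg_le_neg <|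
      (norm_inner_le_norm _ _).trans (mul_le_mul_of_nonneg_right (C.le_opNorm x) (norm_nonneg y))
    _ ≤ (⟪C x, y⟫_ℂ).re := neg_le.mp ((neg_le_abs _).trans (Complex.abs_re_le_norm _))
  rw [norm_sq_spectralLocalizer_apply hH, WithLp.prod_norm_sq_eq_of_L2]
  nlinarith [mul_le_mul_of_nonneg_left (hX x) (sq_nonneg κ),
    mul_le_mul_of_nonneg_left (hX' y) (sq_nonneg κ), mul_le_mul_of_nonneg_left hre hκ,
    mul_nonneg (mul_nonneg hκ (norm_nonneg C)) (sq_nonneg (‖x‖ - ‖y‖)),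
    sq_nonneg ‖H x‖, sq_nonneg ‖H y‖]

end

theorem localizer_exterior_gap_general {E : Type*} [NormedAddCommGroup E] [InnerProductSpace ℂ E]
    [CompleteSpace E] (H X : E →L[ℂ] E) (hH : IsSelfAdjoint H) (ρ : ℝ)
    (hX1 : ((ρ ^ 2 : ℝ) : ℂ) • (1 : E →L[ℂ] E) ≤ ContinuousLinearMap.adjoint X * X)
    (hX2 : ((ρ ^ 2 : ℝ) : ℂ) • (1 : E →L[ℂ] E) ≤ X * ContinuousLinearMap.adjoint X)
    (κ : ℝ) (hκ : 0 < κ)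
    (hκ1 : κ * ‖H * X - X * H‖ ≤ (‖Ring.inverse H‖⁻¹) ^ 3 / (12 * ‖H‖))
    (hκ2 : κ * ρ > 2 * ‖Ring.inverse H‖⁻¹) :
    ((κ ^ 2 * ρ ^ 2 / 2 : ℝ) : ℂ) • (1 : WithLp 2 (E × E) →L[ℂ] WithLp 2 (E × E)) ≤
      (blockOp (-H) ((κ : ℂ) • ContinuousLinearMap.adjoint X) ((κ : ℂ) • X) H) ^ 2 ∧
    IsUnit (blockOp (-H) ((κ : ℂ) • ContinuousLinearMap.adjoint X) ((κ : ℂ) • X) H) := by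
  set g := ‖Ring.inverse H‖⁻¹
  have hg : 0 ≤ g := inv_nonneg.mpr (norm_nonneg _)
  have hcomm : κ * ‖H * X - X * H‖ ≤ κ ^ 2 * ρ ^ 2 / 2 := calc
    κ * ‖H * X - X * H‖ ≤ g ^ 3 / (12 * ‖H‖) := hκ1
    _ = g ^ 2 / 12 * (g / ‖H‖) := by ring
    _ ≤ g ^ 2 / 12 := mul_le_of_le_one_right (by positivity)
      (div_le_one_of_le₀ (inv_norm_ring_inverse_le_norm H) (norm_nonneg H))
    _ ≤ κ ^ 2 * ρ ^ 2 / 2 := by nlinarith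
  have hX : ∀ x, ρ ^ 2 * ‖x‖ ^ 2 ≤ ‖X x‖ ^ 2 :=
    (ofReal_smul_one_le_adjoint_mul_self_iff _ X).mp hX1
  have hX' : ∀ y, ρ ^ 2 * ‖y‖ ^ 2 ≤ ‖adjoint X y‖ ^ 2 :=
    (ofReal_smul_one_le_adjoint_mul_self_iff _ (adjoint X)).mp (by rwa [adjoint_adjoint])
  have hL : ((κ ^ 2 * ρ ^ 2 / 2 : ℝ) : ℂ) • 1 ≤ spectralLocalizer H X κ ^ 2 :=
    ((isSelfAdjoint_spectralLocalizer hH X κ).ofReal_smul_one_le_sq_iff _).mpr fun v =>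
      le_trans (by gcongr; linarith) (le_norm_sq_spectralLocalizer_apply hH hκ.le hX hX' v)
  refine ⟨hL, (isUnit_pow_iff two_ne_zero).mp (CStarAlgebra.isUnit_of_le _ hL ?_)⟩
  exact isStrictlyPositive_ofReal_smul_one (by nlinarith)

/-- Quantitative gap estimate for the localizer on the exterior region: if `H` is selfadjoint
and invertible with `g = ‖H⁻¹‖⁻¹`, `X*X ≥ ρ²·1`, `XX* ≥ ρ²·1`, `κ‖HX − XH‖ ≤ g³/(12‖H‖)`
and `κρ > 2g`, then `L = [[−H, κX*], [κX, H]]` satisfies `L² ≥ (κ²ρ²/2)·1`, so `L` is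
invertible. -/
theorem localizer_exterior_gap {E : Type*} [NormedAddCommGroup E] [InnerProductSpace ℂ E]
    [CompleteSpace E] [Nontrivial E] (H X : E →L[ℂ] E) (hH : IsSelfAdjoint H)
    (hHinv : IsUnit H) (ρ : ℝ) (hρ : 0 < ρ)
    (hX1 : ((ρ ^ 2 : ℝ) : ℂ) • (1 : E →L[ℂ] E) ≤ ContinuousLinearMap.adjoint X * X)
    (hX2 : ((ρ ^ 2 : ℝ) : ℂ) • (1 : E →L[ℂ] E) ≤ X * ContinuousLinearMap.adjoint X)
    (κ : ℝ) (hκ : 0 < κ)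
    (hκ1 : κ * ‖H * X - X * H‖ ≤ (‖Ring.inverse H‖⁻¹) ^ 3 / (12 * ‖H‖))
    (hκ2 : κ * ρ > 2 * ‖Ring.inverse H‖⁻¹) :
    ((κ ^ 2 * ρ ^ 2 / 2 : ℝ) : ℂ) • (1 : WithLp 2 (E × E) →L[ℂ] WithLp 2 (E × E)) ≤
      (blockOp (-H) ((κ : ℂ) • ContinuousLinearMap.adjoint X) ((κ : ℂ) • X) H) ^ 2 ∧
    IsUnit (blockOp (-H) ((κ : ℂ) • ContinuousLinearMap.adjoint X) ((κ : ℂ) • X) H) :=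
  localizer_exterior_gap_general H X hH ρ hX1 hX2 κ hκ hκ1 hκ2
end

section
/- Let E₁ and E₂ be complex Hilbert spaces, let A₁ be a bounded selfadjoint invertible operator on E₁, let A₂ be a bounded selfadjoint invertible operator on E₂, and let V : E₁ → E₂ be a bounded operator satisfying ‖V‖·√(‖A₁⁻¹‖·‖A₂⁻¹‖) < 1. Then for every t ∈ [0,1] the block operator [[A₁, tV*], [tV, A₂]] on the Hilbert space direct sum E₁ ⊕ E₂ is invertible. -/
/-!
With `B = t V*` and `C = t V`, factor
`[[A₁, B], [C, A₂]] = diag(A₁, A₂) * (1 + X)` where `X = [[0, A₁⁻¹ B], [A₂⁻¹ C, 0]]`.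
Although `X` itself need not be small, `X²` is block diagonal with blocks `A₁⁻¹ B A₂⁻¹ C` and
`A₂⁻¹ C A₁⁻¹ B`, so `‖X²‖ ≤ ‖A₁⁻¹‖ ‖A₂⁻¹‖ ‖V‖² < 1`. Hence `1 - X² = (1 + X)(1 - X)` is invertible
by the Neumann series, and so is its commuting factor `1 + X`.
-/

open ContinuousLinearMap

theorem isUnit_one_add_of_norm_mul_self_lt_one {R : Type*} [NormedRing R]
    [HasSummableGeomSeries R] {x : R} (hx : ‖x * x‖ < 1) : IsUnit (1 + x) := by
  have hcomm : Commute (1 + x) (1 - x) := by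
    change (1 + x) * (1 - x) = (1 - x) * (1 + x)
    noncomm_ring
  have hprod : (1 + x) * (1 - x) = 1 - x * x := by noncomm_ring
  exact (hcomm.isUnit_mul_iff.mp (hprod ▸ (Units.oneSub _ hx).isUnit)).1

section BlockOp

variable {E F : Type*} [NormedAddCommGroup E] [InnerProductSpace ℂ E]
  [NormedAddCommGroup F] [InnerProductSpace ℂ F]

@[simp]
theorem blockOp_apply_fst (A : E →L[ℂ] E) (B : F →L[ℂ] E) (C : E →L[ℂ] F) (D : F →L[ℂ] F)
    (z : WithLp 2 (E × F)) : (blockOp A B C D z).fst = A z.fst + B z.snd := by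
  simp [blockOp]

@[simp]
theorem blockOp_apply_snd (A : E →L[ℂ] E) (B : F →L[ℂ] E) (C : E →L[ℂ] F) (D : F →L[ℂ] F)
    (z : WithLp 2 (E × F)) : (blockOp A B C D z).snd = C z.fst + D z.snd := by
  simp [blockOp]

theorem ContinuousLinearMap.ext_withLp_prod {S T : WithLp 2 (E × F) →L[ℂ] WithLp 2 (E × F)}
    (h₁ : ∀ z, (S z).fst = (T z).fst) (h₂ : ∀ z, (S z).snd = (T z).snd) : S = T :=
  ext fun z => WithLp.ofLp_injective 2 (Prod.ext (h₁ z) (h₂ z))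

theorem blockOp_mul (A A' : E →L[ℂ] E) (B B' : F →L[ℂ] E) (C C' : E →L[ℂ] F)
    (D D' : F →L[ℂ] F) :
    blockOp A B C D * blockOp A' B' C' D' =
      blockOp (A ∘L A' + B ∘L C') (A ∘L B' + B ∘L D') (C ∘L A' + D ∘L C') (C ∘L B' + D ∘L D') := by
  refine ext_withLp_prod (fun z => ?_) (fun z => ?_) <;> simp <;> abel

theorem blockOp_one : blockOp (1 : E →L[ℂ] E) 0 0 (1 : F →L[ℂ] F) = 1 :=
  ext_withLp_prod (fun z => by simp) (fun z => by simp)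

theorem IsUnit.blockOp_diag {A : E →L[ℂ] E} {D : F →L[ℂ] F} (hA : IsUnit A) (hD : IsUnit D) :
    IsUnit (blockOp A 0 0 D) := by
  obtain ⟨a, rfl⟩ := hA
  obtain ⟨d, rfl⟩ := hD
  refine ⟨⟨blockOp a 0 0 d, blockOp ↑a⁻¹ 0 0 ↑d⁻¹, ?_, ?_⟩, rfl⟩ <;>
    simp only [blockOp_mul, comp_zero, zero_comp, add_zero, ← mul_def, Units.mul_inv,
      Units.inv_mul, zero_add, blockOp_one]

theorem norm_blockOp_diag_le (A : E →L[ℂ] E) (D : F →L[ℂ] F) :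
    ‖blockOp A 0 0 D‖ ≤ max ‖A‖ ‖D‖ := by
  set m := max ‖A‖ ‖D‖
  refine opNorm_le_bound _ (by positivity) fun z => ?_
  refine le_of_pow_le_pow_left₀ two_ne_zero (by positivity) ?_
  have hA : ‖A z.fst‖ ≤ m * ‖z.fst‖ := A.le_of_opNorm_le (le_max_left _ _) _
  have hD : ‖D z.snd‖ ≤ m * ‖z.snd‖ := D.le_of_opNorm_le (le_max_right _ _) _
  rw [WithLp.prod_norm_sq_eq_of_L2, mul_pow, WithLp.prod_norm_sq_eq_of_L2]
  simp only [blockOp_apply_fst, blockOp_apply_snd, zero_apply, add_zero, zero_add]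
  nlinarith [norm_nonneg (A z.fst), norm_nonneg (D z.snd)]

theorem blockOp_offDiag_mul_self (P : F →L[ℂ] E) (Q : E →L[ℂ] F) :
    blockOp 0 P Q 0 * blockOp 0 P Q 0 = blockOp (P ∘L Q) 0 0 (Q ∘L P) := by
  simp only [blockOp_mul, comp_zero, zero_comp, add_zero, zero_add]

theorem blockOp_eq_diag_mul_one_add {A : E →L[ℂ] E} {D : F →L[ℂ] F} (hA : IsUnit A)
    (hD : IsUnit D) (B : F →L[ℂ] E) (C : E →L[ℂ] F) :
    blockOp A B C D =
      blockOp A 0 0 D * (1 + blockOp 0 (Ring.inverse A ∘L B) (Ring.inverse D ∘L C) 0) := by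
  have hA' : ∀ x, A (Ring.inverse A x) = x := DFunLike.congr_fun (Ring.mul_inverse_cancel A hA)
  have hD' : ∀ y, D (Ring.inverse D y) = y := DFunLike.congr_fun (Ring.mul_inverse_cancel D hD)
  refine ext_withLp_prod (fun z => ?_) (fun z => ?_) <;> simp [hA', hD', add_comm]

theorem isUnit_blockOp_of_norm_lt [CompleteSpace E] [CompleteSpace F] {A : E →L[ℂ] E}
    {D : F →L[ℂ] F} (hA : IsUnit A) (hD : IsUnit D) {B : F →L[ℂ] E} {C : E →L[ℂ] F}
    (h : ‖Ring.inverse A‖ * ‖B‖ * (‖Ring.inverse D‖ * ‖C‖) < 1) :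
    IsUnit (blockOp A B C D) := by
  set P := Ring.inverse A ∘L B
  set Q := Ring.inverse D ∘L C
  rw [blockOp_eq_diag_mul_one_add hA hD]
  refine (hA.blockOp_diag hD).mul (isUnit_one_add_of_norm_mul_self_lt_one ?_)
  calc ‖blockOp 0 P Q 0 * blockOp 0 P Q 0‖
      ≤ max ‖P ∘L Q‖ ‖Q ∘L P‖ := blockOp_offDiag_mul_self P Q ▸ norm_blockOp_diag_le _ _
    _ ≤ ‖P‖ * ‖Q‖ := max_le (opNorm_comp_le _ _) ((opNorm_comp_le _ _).trans_eq (mul_comm _ _))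
    _ ≤ ‖Ring.inverse A‖ * ‖B‖ * (‖Ring.inverse D‖ * ‖C‖) :=
      mul_le_mul (opNorm_comp_le _ _) (opNorm_comp_le _ _) (norm_nonneg _) (by positivity)
    _ < 1 := h

end BlockOp

theorem block_decoupling_invertible_general {E₁ E₂ : Type*}
    [NormedAddCommGroup E₁] [InnerProductSpace ℂ E₁] [CompleteSpace E₁]
    [NormedAddCommGroup E₂] [InnerProductSpace ℂ E₂] [CompleteSpace E₂]
    (A₁ : E₁ →L[ℂ] E₁) (A₂ : E₂ →L[ℂ] E₂) (V : E₁ →L[ℂ] E₂)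
    (hA₁inv : IsUnit A₁) (hA₂inv : IsUnit A₂)
    (hV : ‖V‖ * Real.sqrt (‖Ring.inverse A₁‖ * ‖Ring.inverse A₂‖) < 1) :
    ∀ t ∈ Set.Icc (0 : ℝ) 1,
      IsUnit (blockOp A₁ ((t : ℂ) • ContinuousLinearMap.adjoint V) ((t : ℂ) • V) A₂) := by
  rintro t ⟨ht₀, ht₁⟩
  have ht : ‖(t : ℂ)‖ ≤ 1 := by rwa [Complex.norm_real, Real.norm_of_nonneg ht₀]
  have hB : ‖(t : ℂ) • adjoint V‖ ≤ ‖V‖ := (norm_smul _ _).trans_le <| by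
    rw [LinearIsometryEquiv.norm_map]; exact mul_le_of_le_one_left (norm_nonneg _) ht
  have hC : ‖(t : ℂ) • V‖ ≤ ‖V‖ :=
    (norm_smul _ _).trans_le (mul_le_of_le_one_left (norm_nonneg _) ht)
  have hV_sq : ‖V‖ ^ 2 * (‖Ring.inverse A₁‖ * ‖Ring.inverse A₂‖) < 1 := by
    simpa [mul_pow, Real.sq_sqrt (by positivity : 0 ≤ ‖Ring.inverse A₁‖ * ‖Ring.inverse A₂‖)]
      using pow_lt_one₀ (by positivity) hV two_ne_zero
  refine isUnit_blockOp_of_norm_lt hA₁inv hA₂inv ?_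
  calc ‖Ring.inverse A₁‖ * ‖(t : ℂ) • adjoint V‖ * (‖Ring.inverse A₂‖ * ‖(t : ℂ) • V‖)
      ≤ ‖Ring.inverse A₁‖ * ‖V‖ * (‖Ring.inverse A₂‖ * ‖V‖) := by gcongr
    _ = ‖V‖ ^ 2 * (‖Ring.inverse A₁‖ * ‖Ring.inverse A₂‖) := by ring
    _ < 1 := hV_sq

/-- Decoupling lemma: if `A₁`, `A₂` are bounded selfadjoint invertible operators and
`V : E₁ → E₂` satisfies `‖V‖·√(‖A₁⁻¹‖·‖A₂⁻¹‖) < 1`, then for every `t ∈ [0,1]` the block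
operator `[[A₁, tV*], [tV, A₂]]` on `E₁ ⊕ E₂` is invertible. -/
theorem block_decoupling_invertible {E₁ E₂ : Type*}
    [NormedAddCommGroup E₁] [InnerProductSpace ℂ E₁] [CompleteSpace E₁]
    [NormedAddCommGroup E₂] [InnerProductSpace ℂ E₂] [CompleteSpace E₂]
    (A₁ : E₁ →L[ℂ] E₁) (A₂ : E₂ →L[ℂ] E₂) (V : E₁ →L[ℂ] E₂)
    (hA₁ : IsSelfAdjoint A₁) (hA₂ : IsSelfAdjoint A₂)
    (hA₁inv : IsUnit A₁) (hA₂inv : IsUnit A₂)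
    (hV : ‖V‖ * Real.sqrt (‖Ring.inverse A₁‖ * ‖Ring.inverse A₂‖) < 1) :
    ∀ t ∈ Set.Icc (0 : ℝ) 1,
      IsUnit (blockOp A₁ ((t : ℂ) • ContinuousLinearMap.adjoint V) ((t : ℂ) • V) A₂) :=
  block_decoupling_invertible_general A₁ A₂ V hA₁inv hA₂inv hV
end
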